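/- If n = p₁^{a₁}···p_k^{a_k} with distinct primes p_i, then z(n) = ∑_{i=1}^k ∑_{j=1}^{a_i} (j·log p_i / p_i^j) · h(n / p_i^{a_i}), where h(m) = σ(m)/m. -/

import Mathlib

/-!
Expanding `log d = ∑ₚ v_p(d) log p` and exchanging the sums reduces the identity to computing
`∑_{d ∣ n} v_p(d) / d` for a single prime `p`. Writing `n = p^a m` with `p ∤ m`, the divisors of `n`
are exactly the products `p^j e` with `j ≤ a` and `e ∣ m`, and `v_p(p^j e) = j`; so that sum factors
as `(∑_{j ≤ a} j / p^j) · ∑_{e ∣ m} 1/e`, and the involution `e ↦ m / e` turns the last factor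
into `σ(m) / m`.
-/

open Finset

theorem Real.log_natCast_eq_sum_primeFactors_of_dvd {d n : ℕ} (hd : d ∣ n) (hn : n ≠ 0) :
    Real.log d = ∑ p ∈ n.primeFactors, d.factorization p * Real.log p := by
  rw [Real.log_nat_eq_sum_factorization, Finsupp.sum_of_support_subset _
    ((Nat.support_factorization d).trans_subset (Nat.primeFactors_mono hd hn))]
  simp

theorem Nat.Coprime.sum_divisors_mul_eq_sum_sum {M : Type*} [AddCommMonoid M] {m n : ℕ}
    (hmn : m.Coprime n) (f : ℕ → M) :
    ∑ d ∈ (m * n).divisors, f d = ∑ a ∈ m.divisors, ∑ b ∈ n.divisors, f (a * b) := by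
  rw [hmn.divisors_mul, sum_map]
  exact (sum_attach _ (fun x : ℕ × ℕ => f (x.1 * x.2))).trans (sum_product _ _ _)

theorem Nat.factorization_pow_mul_of_not_dvd {p e : ℕ} (hp : p.Prime) (he : ¬p ∣ e) (j : ℕ) :
    (p ^ j * e).factorization p = j := by
  rw [Nat.factorization_mul (pow_ne_zero j hp.ne_zero) (by rintro rfl; exact he (dvd_zero p)),
    Finsupp.add_apply, hp.factorization_pow, Finsupp.single_eq_same,
    Nat.factorization_eq_zero_of_not_dvd he, add_zero]

theorem Nat.sum_divisors_inv {K : Type*} [Field K] [CharZero K] (m : ℕ) :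
    ∑ e ∈ m.divisors, (e : K)⁻¹ = ((∑ e ∈ m.divisors, e : ℕ) : K) / m := by
  rw [← Nat.sum_div_divisors m (fun e => (e : K)⁻¹), Nat.cast_sum, sum_div]
  refine sum_congr rfl fun e he => ?_
  rw [Nat.cast_div (Nat.dvd_of_mem_divisors he)
    (by exact_mod_cast (Nat.pos_of_mem_divisors he).ne'),
    inv_div]

theorem Nat.sum_divisors_factorization_div {n p : ℕ} (hp : p.Prime) (hn : n ≠ 0) :
    ∑ d ∈ n.divisors, (d.factorization p : ℝ) / d =
      ∑ j ∈ Icc 1 (n.factorization p), (j / (p : ℝ) ^ j) *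
        ∑ e ∈ (n / p ^ n.factorization p).divisors, (e : ℝ)⁻¹ := by
  set a := n.factorization p
  set m := n / p ^ a
  have hpm : ¬p ∣ m := (hp.coprime_iff_not_dvd).mp (Nat.coprime_ordCompl hp hn)
  calc ∑ d ∈ n.divisors, (d.factorization p : ℝ) / d
      = ∑ j ∈ range (a + 1), ∑ e ∈ m.divisors,
          ((p ^ j * e).factorization p : ℝ) / (p ^ j * e : ℕ) := by
        conv_lhs => rw [← Nat.ordProj_mul_ordCompl_eq_self n p]
        rw [((Nat.coprime_ordCompl hp hn).pow_left a).sum_divisors_mul_eq_sum_sum,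
          Nat.sum_divisors_prime_pow hp]
    _ = ∑ j ∈ range (a + 1), (j / (p : ℝ) ^ j) * ∑ e ∈ m.divisors, (e : ℝ)⁻¹ := by
        refine sum_congr rfl fun j _ => ?_
        rw [mul_sum]
        refine sum_congr rfl fun e he => ?_
        rw [Nat.factorization_pow_mul_of_not_dvd hp
          (fun h => hpm (h.trans (Nat.dvd_of_mem_divisors he)))]
        push_cast
        ring
    _ = _ := by
        rw [range_eq_Ico, sum_eq_sum_Ico_succ_bot (by omega), Finset.Ico_add_one_right_eq_Icc]
        simp

theorem erdos_zaremba_rearrangement_general (n : ℕ) :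
    ∑ d ∈ n.divisors, Real.log d / d =
      ∑ p ∈ n.primeFactors, ∑ j ∈ Finset.Icc 1 (n.factorization p),
        (j * Real.log p / (p : ℝ) ^ j) *
          (((∑ e ∈ (n / p ^ n.factorization p).divisors, e : ℕ) : ℝ) / (n / p ^ n.factorization p)) := by
  rcases eq_or_ne n 0 with rfl | hn
  · simp
  calc ∑ d ∈ n.divisors, Real.log d / d
      = ∑ d ∈ n.divisors, ∑ p ∈ n.primeFactors, Real.log p * ((d.factorization p : ℝ) / d) :=
        sum_congr rfl fun d hd => by
          rw [Real.log_natCast_eq_sum_primeFactors_of_dvd (Nat.dvd_of_mem_divisors hd) hn, sum_div]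
          exact sum_congr rfl fun p _ => by ring
    _ = ∑ p ∈ n.primeFactors, Real.log p * ∑ d ∈ n.divisors, (d.factorization p : ℝ) / d := by
        rw [sum_comm]
        simp_rw [mul_sum]
    _ = _ := sum_congr rfl fun p hpn => by
        have hp := Nat.prime_of_mem_primeFactors hpn
        rw [Nat.sum_divisors_factorization_div hp hn, Nat.sum_divisors_inv, mul_sum,
          ← Nat.cast_pow,
          ← Nat.cast_div (Nat.ordProj_dvd n p) (by exact_mod_cast pow_ne_zero _ hp.ne_zero)]
        exact sum_congr rfl fun j _ => by ring

theorem erdos_zaremba_rearrangement (n : ℕ) (hn : 0 < n) :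
    ∑ d ∈ n.divisors, Real.log d / d =
      ∑ p ∈ n.primeFactors, ∑ j ∈ Finset.Icc 1 (n.factorization p),
        (j * Real.log p / (p : ℝ) ^ j) *
          (((∑ e ∈ (n / p ^ n.factorization p).divisors, e : ℕ) : ℝ) / (n / p ^ n.factorization p)) :=
  erdos_zaremba_rearrangement_general n
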